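/- arXiv:2211.14140 — 3 statements merged into one kernel-verified Lean document; each statement's English description precedes it below -/
import Mathlib

section
/- Let Φ = {φ₁,…,φ_k} be an IFS and a ∈ Ω_k. Then the set of δ ∈ ℝ such that the pair (Φ, a+δ) has a singular connection is countable. -/
/-!
A singular connection of `(Φ, a + δ)` means that `δ` solves `φ_ω (a_i + δ) = a_j + δ` for one of
countably many triples `(ω, i, j)`. Each such `δ` is a fixed point of the contraction
`δ ↦ φ_ω (a_i + δ) - a_j`, so each equation has at most one solution.
-/

open Filter Set Topology
open scoped NNReal

noncomputable def pcIdx {k : ℕ} (hk : 2 ≤ k) (a : Fin (k-1) → ℝ) (x : ℝ) : Fin k :=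
  ⟨(Finset.univ.filter fun i => a i ≤ x).card, by
    have h := Finset.card_filter_le (Finset.univ : Finset (Fin (k-1))) (fun i => a i ≤ x)
    simp only [Finset.card_univ, Fintype.card_fin] at h
    omega⟩

/-- The piecewise contraction `f_{Φ,a}` determined by the IFS `φ` and partition points `a`. -/
noncomputable def pc {k : ℕ} (hk : 2 ≤ k) (φ : Fin k → ℝ → ℝ) (a : Fin (k-1) → ℝ) (x : ℝ) : ℝ :=
  φ (pcIdx hk a x) x

/-- `φ_ω = φ_{ω_n} ∘ ⋯ ∘ φ_{ω_1}`. -/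
def wcomp {k : ℕ} (φ : Fin k → ℝ → ℝ) {n : ℕ} (ω : Fin n → Fin k) (x : ℝ) : ℝ :=
  (List.ofFn ω).foldl (fun y i => φ i y) x

/-- `(Φ,a)` has a singular connection: `φ_ω(S_a) ∩ S_a ≠ ∅` for some nonempty word `ω`. -/
def hasSingConn {k : ℕ} (φ : Fin k → ℝ → ℝ) (a : Fin (k-1) → ℝ) : Prop :=
  ∃ n : ℕ, ∃ ω : Fin (n+1) → Fin k, ∃ i j : Fin (k-1), wcomp φ ω (a i) = a j

/-- `max_i |z i|`. -/
noncomputable def maxAbs {k : ℕ} (hk : 2 ≤ k) (z : Fin k → ℝ) : ℝ :=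
  Finset.univ.sup' (Finset.univ_nonempty_iff.mpr ⟨⟨0, by omega⟩⟩) fun i => |z i|

/-- The set of itineraries of order `n` of `(Φ,a)`. -/
noncomputable def itin {k : ℕ} (hk : 2 ≤ k) (φ : Fin k → ℝ → ℝ) (a : Fin (k-1) → ℝ) (n : ℕ) :
    Set (Fin n → Fin k) :=
  {ω | ∃ x : ℝ, (∀ j < n, (pc hk φ a)^[j] x ∉ Set.range a) ∧
       ∀ j : Fin n, ω j = pcIdx hk a ((pc hk φ a)^[(j : ℕ)] x)}

/-- `I^{(n)}_{Φ,a}(ε) = ⋃_{|δ| ≤ ε} I^{(n)}_{Φ,a+δ}`. -/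
noncomputable def itinE {k : ℕ} (hk : 2 ≤ k) (φ : Fin k → ℝ → ℝ) (a : Fin (k-1) → ℝ)
    (ε : ℝ) (n : ℕ) : Set (Fin n → Fin k) :=
  {ω | ∃ δ : ℝ, |δ| ≤ ε ∧ ω ∈ itin hk φ (fun i => a i + δ) n}

/-- `Ω^ε_{Φ,a} = ⋂_{m ≥ 1} closure (⋃_{n ≥ m} ⋃_{ω ∈ I^{(n)}(ε)} {φ_ω(0)})`. -/
noncomputable def omegaSet {k : ℕ} (hk : 2 ≤ k) (φ : Fin k → ℝ → ℝ) (a : Fin (k-1) → ℝ)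
    (ε : ℝ) : Set ℝ :=
  ⋂ m : ℕ, closure {y : ℝ | ∃ n, m ≤ n ∧ ∃ ω ∈ itinE hk φ a ε n, wcomp φ ω 0 = y}

/-- The ω-limit set of `x` under `f`. -/
def omegaLimitPt (f : ℝ → ℝ) (x : ℝ) : Set ℝ :=
  {y | MapClusterPt y Filter.atTop fun n => f^[n] x}

/-- `f` is asymptotically periodic. -/
def AsympPeriodic (f : ℝ → ℝ) : Prop :=
  {x : ℝ | ∃ p : ℕ, 1 ≤ p ∧ f^[p] x = x}.Finite ∧
  ∀ x : ℝ, ∃ z : ℝ, ∃ p : ℕ, 1 ≤ p ∧ f^[p] z = z ∧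
    omegaLimitPt f x = Set.range fun j : Fin p => f^[(j : ℕ)] z

/-- `f` is asymptotically periodic on the invariant set `s`. -/
def AsympPeriodicOn (f : ℝ → ℝ) (s : Set ℝ) : Prop :=
  {x ∈ s | ∃ p : ℕ, 1 ≤ p ∧ f^[p] x = x}.Finite ∧
  ∀ x ∈ s, ∃ z : ℝ, ∃ p : ℕ, 1 ≤ p ∧ f^[p] z = z ∧
    omegaLimitPt f x = Set.range fun j : Fin p => f^[(j : ℕ)] z

lemma LipschitzWith.foldl {α ι : Type*} [PseudoEMetricSpace α] {φ : ι → α → α} {K : ℝ≥0}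
    (hφ : ∀ i, LipschitzWith K (φ i)) (l : List ι) :
    LipschitzWith (K ^ l.length) fun x => l.foldl (fun y i => φ i y) x := by
  induction l with
  | nil => exact LipschitzWith.id
  | cons i l ih =>
    rw [List.length_cons, pow_succ]
    exact ih.comp (hφ i)

lemma lipschitzWith_wcomp {k n : ℕ} {φ : Fin k → ℝ → ℝ} {K : ℝ≥0}
    (hφ : ∀ i, LipschitzWith K (φ i)) (ω : Fin n → Fin k) :
    LipschitzWith (K ^ n) (wcomp φ ω) := by
  have h := LipschitzWith.foldl hφ (List.ofFn ω)
  rw [List.length_ofFn] at h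
  exact h

lemma contractingWith_wcomp {k n : ℕ} {φ : Fin k → ℝ → ℝ} {K : ℝ≥0} (hK : K < 1)
    (hφ : ∀ i, LipschitzWith K (φ i)) (ω : Fin (n + 1) → Fin k) :
    ContractingWith K (wcomp φ ω) :=
  ⟨hK, (lipschitzWith_wcomp hφ ω).weaken <| pow_le_of_le_one zero_le hK.le n.succ_ne_zero⟩

lemma ContractingWith.subsingleton_setOf_map_add_eq {E : Type*} [NormedAddCommGroup E]
    {f : E → E} {K : ℝ≥0} (hf : ContractingWith K f) (x y : E) :
    {δ | f (x + δ) = y + δ}.Subsingleton := by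
  have hg : ContractingWith K fun δ => f (x + δ) - y :=
    ⟨hf.1, by simpa [Function.comp_def, sub_eq_add_neg] using
      ((isometry_add_right (-y)).lipschitz.comp (hf.2.comp (isometry_add_left x).lipschitz))⟩
  intro δ₁ h₁ δ₂ h₂
  refine hg.fixedPoint_unique' ?_ ?_
  · simp [Function.IsFixedPt, show f (x + δ₁) = y + δ₁ from h₁]
  · simp [Function.IsFixedPt, show f (x + δ₂) = y + δ₂ from h₂]

theorem stmt6_general {k : ℕ} (φ : Fin k → ℝ → ℝ) (lam : ℝ≥0) (hlam : lam < 1)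
    (hlip : ∀ i, LipschitzWith lam (φ i))
    (a : Fin (k-1) → ℝ) :
    Set.Countable {δ : ℝ | hasSingConn φ (fun i => a i + δ)} := by
  have hcover : {δ : ℝ | hasSingConn φ (fun i => a i + δ)} =
      ⋃ (n : ℕ) (ω : Fin (n + 1) → Fin k) (i : Fin (k - 1)) (j : Fin (k - 1)),
        {δ | wcomp φ ω (a i + δ) = a j + δ} := by
    ext δ
    simp [hasSingConn]
  rw [hcover]
  refine countable_iUnion fun n => countable_iUnion fun ω => countable_iUnion fun i =>
    countable_iUnion fun j => ?_
  exact ((contractingWith_wcomp hlam hlip ω).subsingleton_setOf_map_add_eq _ _).countable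

theorem stmt6 {k : ℕ} (hk : 2 ≤ k) (φ : Fin k → ℝ → ℝ) (lam : ℝ≥0) (hlam : lam < 1)
    (hlip : ∀ i, LipschitzWith lam (φ i))
    (a : Fin (k-1) → ℝ) (ha : StrictMono a) :
    Set.Countable {δ : ℝ | hasSingConn φ (fun i => a i + δ)} :=
  stmt6_general φ lam hlam hlip a
end

section
/- Let Φ be an injective IFS and a ∈ Ω_k such that (Φ,a) has no singular connection. If the set Q_a := (⋃_{n≥0} Q_a^{(n)}) ∩ K_Φ is finite, then f_{Φ,a} is asymptotically periodic: f_{Φ,a} has at most finitely many periodic orbits and the ω-limit set of every point x ∈ ℝ is a periodic orbit. -/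
open Filter Set Topology
open scoped NNReal

/-!
Off the singular set `A = ⋃ₙ f⁻ⁿ(S_a)` the map `f` is locally one of the branches `φ i`; hence
two points joined by an interval disjoint from `A` have the same itinerary, and their orbits
converge together geometrically. Every orbit eventually stays in `K = [-2r, 2r]` (if `r = 0` it
simply converges to the fixed point `0`), and `A ∩ K` is finite, so the position of a point of `K`
relative to `A ∩ K` takes only finitely many values. An orbit meeting `A ∩ K` infinitely often
repeats a point. Otherwise two of its regular points in `K` have the same position, hence span an
interval disjoint from `A`, and the itinerary is eventually periodic, of period `T` say. The
composition of the branches along one period is a contraction; as there is no singular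
connection, the orbit of its fixed point avoids `S_a`, so this fixed point is a `T`-periodic point
of `f` shadowing the orbit. Likewise distinct periodic points, which all lie in `K`, have
distinct positions.
-/

open Function

section Words

variable {k : ℕ} {φ : Fin k → ℝ → ℝ}

variable (φ) in
def wcompSeq (ι : ℕ → Fin k) (n : ℕ) : ℝ → ℝ :=
  wcomp φ fun j : Fin n => ι j

lemma wcompSeq_succ (ι : ℕ → Fin k) (n : ℕ) (x : ℝ) :
    wcompSeq φ ι (n + 1) x = φ (ι n) (wcompSeq φ ι n x) := by
  simp only [wcompSeq, wcomp, List.ofFn_succ', List.concat_eq_append, List.foldl_concat]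
  rfl

lemma wcompSeq_add (ι : ℕ → Fin k) (n m : ℕ) (x : ℝ) :
    wcompSeq φ ι (n + m) x = wcompSeq φ (fun j => ι (n + j)) m (wcompSeq φ ι n x) := by
  induction m with
  | zero => rfl
  | succ m ih => rw [← add_assoc, wcompSeq_succ, ih, wcompSeq_succ]

lemma wcompSeq_add_of_periodic {ι : ℕ → Fin k} {T : ℕ} (hι : Periodic ι T) (n : ℕ) (x : ℝ) :
    wcompSeq φ ι (T + n) x = wcompSeq φ ι n (wcompSeq φ ι T x) := by
  rw [wcompSeq_add]
  congr 1
  funext j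
  rw [add_comm]
  exact hι j

lemma wcompSeq_mul_of_periodic {ι : ℕ → Fin k} {T : ℕ} (hι : Periodic ι T) (j : ℕ) (x : ℝ) :
    wcompSeq φ ι (j * T) x = (wcompSeq φ ι T)^[j] x := by
  induction j generalizing x with
  | zero => rw [zero_mul]; rfl
  | succ j ih => rw [show (j + 1) * T = T + j * T by ring, wcompSeq_add_of_periodic hι, ih]; rfl

lemma lipschitzWith_wcompSeq {lam : ℝ≥0} (hlip : ∀ i, LipschitzWith lam (φ i)) (ι : ℕ → Fin k)
    (n : ℕ) : LipschitzWith (lam ^ n) (wcompSeq φ ι n) := by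
  induction n with
  | zero => exact LipschitzWith.id
  | succ n ih =>
    rw [show wcompSeq φ ι (n + 1) = φ (ι n) ∘ wcompSeq φ ι n from funext (wcompSeq_succ ι n),
      pow_succ']
    exact (hlip _).comp ih

/-- A singular point on the orbit of a fixed point of a periodic word would be mapped back to
itself by the word read from that position on. -/
lemma wcompSeq_notMem_range_of_periodic {a : Fin (k - 1) → ℝ} (hns : ¬ hasSingConn φ a)
    {ι : ℕ → Fin k} {T : ℕ} (hι : Periodic ι T) (hT : 0 < T) {z : ℝ}
    (hz : wcompSeq φ ι T z = z) (n : ℕ) : wcompSeq φ ι n z ∉ Set.range a := by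
  rintro ⟨i, hi⟩
  obtain ⟨T, rfl⟩ := Nat.exists_eq_add_one_of_ne_zero hT.ne'
  refine hns ⟨T, fun j => ι (n + j), i, i, ?_⟩
  change wcompSeq φ (fun j => ι (n + j)) (T + 1) (a i) = a i
  rw [hi, ← wcompSeq_add, add_comm, wcompSeq_add_of_periodic hι, hz]

end Words

section Dynamics

variable {k : ℕ} (hk : 2 ≤ k) {φ : Fin k → ℝ → ℝ} {a : Fin (k - 1) → ℝ}

variable (φ a) in
/-- The paper's `Q_a` is `singSet hk φ a ∩ K_Φ`. -/
def singSet : Set ℝ :=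
  ⋃ n : ℕ, (pc hk φ a)^[n] ⁻¹' Set.range a

lemma range_subset_singSet : Set.range a ⊆ singSet hk φ a :=
  subset_iUnion (fun n => (pc hk φ a)^[n] ⁻¹' Set.range a) 0

lemma mem_singSet_of_pc_mem {t : ℝ} (ht : pc hk φ a t ∈ singSet hk φ a) : t ∈ singSet hk φ a := by
  obtain ⟨n, hn⟩ := mem_iUnion.1 ht
  exact mem_iUnion.2 ⟨n + 1, hn⟩

variable {hk}

lemma pcIdx_eq_of_disjoint {x y : ℝ} (h : Disjoint (uIcc x y) (Set.range a)) :
    pcIdx hk a x = pcIdx hk a y := by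
  have hle : ∀ i, a i ≤ x ↔ a i ≤ y := fun i => by
    have hi : a i ∉ uIcc x y := fun hmem => h.ne_of_mem hmem ⟨i, rfl⟩ rfl
    rw [mem_uIcc] at hi
    grind
  simp only [pcIdx, hle]

lemma pcIdx_eventually_eq {x : ℝ} (h : x ∉ Set.range a) :
    ∀ᶠ y in 𝓝 x, pcIdx hk a y = pcIdx hk a x := by
  obtain ⟨ε, hε, hball⟩ :=
    Metric.mem_nhds_iff.1 ((finite_range a).isClosed.isOpen_compl.mem_nhds h)
  filter_upwards [Metric.ball_mem_nhds x hε] with y hy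
  refine pcIdx_eq_of_disjoint (subset_compl_iff_disjoint_right.1 (Subset.trans ?_ hball))
  rw [Real.ball_eq_Ioo] at hy ⊢
  exact ordConnected_Ioo.uIcc_subset hy (Real.ball_eq_Ioo x ε ▸ Metric.mem_ball_self hε)

lemma disjoint_uIcc_pc (hφ : ∀ i, Continuous (φ i)) {x y : ℝ}
    (h : Disjoint (uIcc x y) (singSet hk φ a)) :
    Disjoint (uIcc (pc hk φ a x) (pc hk φ a y)) (singSet hk φ a) := by
  set i := pcIdx hk a x
  have hbranch : EqOn (pc hk φ a) (φ i) (uIcc x y) := fun t ht => by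
    rw [pc, pcIdx_eq_of_disjoint ((h.mono_right (range_subset_singSet hk)).mono_left
      (uIcc_subset_uIcc ht left_mem_uIcc))]
  have himage : uIcc (pc hk φ a x) (pc hk φ a y) ⊆ pc hk φ a '' uIcc x y := by
    rw [hbranch left_mem_uIcc, hbranch right_mem_uIcc, hbranch.image_eq]
    exact intermediate_value_uIcc (hφ i).continuousOn
  rw [← subset_compl_iff_disjoint_right] at h ⊢
  rintro _ hw
  obtain ⟨t, ht, rfl⟩ := himage hw
  exact fun hmem => h ht (mem_singSet_of_pc_mem hk hmem)

lemma pcIdx_iterate_eq_of_disjoint (hφ : ∀ i, Continuous (φ i)) {x y : ℝ}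
    (h : Disjoint (uIcc x y) (singSet hk φ a)) (n : ℕ) :
    pcIdx hk a ((pc hk φ a)^[n] x) = pcIdx hk a ((pc hk φ a)^[n] y) := by
  have hn : Disjoint (uIcc ((pc hk φ a)^[n] x) ((pc hk φ a)^[n] y)) (singSet hk φ a) := by
    induction n with
    | zero => exact h
    | succ n ih =>
      rw [iterate_succ_apply', iterate_succ_apply']
      exact disjoint_uIcc_pc hφ ih
  exact pcIdx_eq_of_disjoint (hn.mono_right (range_subset_singSet hk))

lemma iterate_pc_eq_wcompSeq (x : ℝ) (n : ℕ) :
    (pc hk φ a)^[n] x = wcompSeq φ (fun j => pcIdx hk a ((pc hk φ a)^[j] x)) n x := by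
  induction n with
  | zero => rfl
  | succ n ih => rw [iterate_succ_apply', wcompSeq_succ, ← ih]; rfl

lemma iterate_pc_eq_wcompSeq_of_pcIdx {ι : ℕ → Fin k} {x : ℝ}
    (h : ∀ n, pcIdx hk a (wcompSeq φ ι n x) = ι n) (n : ℕ) :
    (pc hk φ a)^[n] x = wcompSeq φ ι n x := by
  induction n with
  | zero => rfl
  | succ n ih => rw [iterate_succ_apply', ih, wcompSeq_succ, ← h n]; rfl

variable {lam : ℝ≥0} (hlip : ∀ i, LipschitzWith lam (φ i))
include hlip

lemma dist_iterate_pc_le_of_pcIdx_eq {x y : ℝ}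
    (h : ∀ n, pcIdx hk a ((pc hk φ a)^[n] x) = pcIdx hk a ((pc hk φ a)^[n] y)) (n : ℕ) :
    dist ((pc hk φ a)^[n] x) ((pc hk φ a)^[n] y) ≤ lam ^ n * dist x y := by
  rw [iterate_pc_eq_wcompSeq x, iterate_pc_eq_wcompSeq y, ← funext h]
  exact (lipschitzWith_wcompSeq hlip _ n).dist_le_mul x y

lemma eq_of_isPeriodicPt_of_pcIdx_eq (hlam : lam < 1) {x y : ℝ} {p q : ℕ} (hp : 0 < p)
    (hq : 0 < q) (hx : IsPeriodicPt (pc hk φ a) p x) (hy : IsPeriodicPt (pc hk φ a) q y)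
    (h : ∀ n, pcIdx hk a ((pc hk φ a)^[n] x) = pcIdx hk a ((pc hk φ a)^[n] y)) : x = y := by
  have hd := dist_iterate_pc_le_of_pcIdx_eq hlip h (p * q)
  rw [(hx.mul_const q).eq, (hy.const_mul p).eq] at hd
  have hpow : (lam : ℝ) ^ (p * q) < 1 := pow_lt_one₀ (zero_le (a := lam)) hlam (by positivity)
  exact dist_le_zero.1 (by nlinarith [dist_nonneg (x := x) (y := y)])

lemma abs_pc_le {z : Fin k → ℝ} (hz : ∀ i, φ i (z i) = z i) (t : ℝ) :
    |pc hk φ a t| ≤ lam * |t| + (1 + lam) * maxAbs hk z := by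
  set i := pcIdx hk a t
  have hzi : |z i| ≤ maxAbs hk z := Finset.le_sup' (fun i => |z i|) (Finset.mem_univ i)
  have hdist : |φ i t - z i| ≤ lam * |t - z i| := by
    simpa [Real.dist_eq, hz i] using (hlip i).dist_le_mul t (z i)
  calc |pc hk φ a t| = |(φ i t - z i) + z i| := by rw [sub_add_cancel]; rfl
    _ ≤ lam * (|t| + |z i|) + |z i| := by
      grw [abs_add_le, hdist, abs_sub]
    _ ≤ lam * |t| + (1 + lam) * maxAbs hk z := by
      linarith [mul_le_mul_of_nonneg_left hzi lam.coe_nonneg]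

theorem exists_isPeriodicPt_tendsto_dist (hlam : lam < 1) (hns : ¬ hasSingConn φ a) {u : ℝ}
    {T : ℕ} (hT : 0 < T) (hper : Periodic (fun n => pcIdx hk a ((pc hk φ a)^[n] u)) T) :
    ∃ z, IsPeriodicPt (pc hk φ a) T z ∧
      Tendsto (fun n => dist ((pc hk φ a)^[n] u) ((pc hk φ a)^[n] z)) atTop (𝓝 0) := by
  set ι := fun n => pcIdx hk a ((pc hk φ a)^[n] u)
  have hg : ContractingWith (lam ^ T) (wcompSeq φ ι T) :=
    ⟨pow_lt_one₀ (zero_le (a := lam)) hlam hT.ne', lipschitzWith_wcompSeq hlip ι T⟩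
  set z := hg.fixedPoint
  have hgz : wcompSeq φ ι T z = z := hg.fixedPoint_isFixedPt
  have hlim (n : ℕ) :
      Tendsto (fun j => (pc hk φ a)^[j * T + n] u) atTop (𝓝 (wcompSeq φ ι n z)) := by
    refine (((lipschitzWith_wcompSeq hlip ι n).continuous.tendsto z).comp
      (hg.tendsto_iterate_fixedPoint u)).congr fun j => ?_
    rw [iterate_pc_eq_wcompSeq u, comp_apply, ← wcompSeq_mul_of_periodic hper,
      ← wcompSeq_add_of_periodic (by simpa using hper.nat_mul j)]
  -- `pcIdx` is locally constant at the limit points `wcompSeq φ ι n z`, which avoid `S_a`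
  have hidx (n : ℕ) : pcIdx hk a (wcompSeq φ ι n z) = ι n := by
    obtain ⟨j, hj⟩ := ((hlim n).eventually
      (pcIdx_eventually_eq (wcompSeq_notMem_range_of_periodic hns hper hT hgz n))).exists
    rw [← hj, add_comm]
    simpa using hper.nat_mul j n
  have hz := iterate_pc_eq_wcompSeq_of_pcIdx hidx
  have hcontr : Tendsto (fun n => (lam : ℝ) ^ n * dist u z) atTop (𝓝 0) := by
    simpa using (tendsto_pow_atTop_nhds_zero_of_lt_one lam.coe_nonneg hlam).mul_const (dist u z)
  refine ⟨z, (hz T).trans hgz, squeeze_zero (fun _ => dist_nonneg) (fun n => ?_) hcontr⟩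
  rw [iterate_pc_eq_wcompSeq u, hz]
  exact (lipschitzWith_wcompSeq hlip ι n).dist_le_mul u z

end Dynamics

section OmegaLimit

lemma MapClusterPt.of_tendsto_dist {α X : Type*} [PseudoMetricSpace X] {l : Filter α}
    {u v : α → X} {y : X} (hu : MapClusterPt y l u)
    (huv : Tendsto (fun n => dist (u n) (v n)) l (𝓝 0)) : MapClusterPt y l v := by
  rw [Metric.nhds_basis_ball.mapClusterPt_iff_frequently] at hu ⊢
  intro ε hε
  refine ((hu (ε / 2) (half_pos hε)).and_eventually
    (huv.eventually (gt_mem_nhds (half_pos hε)))).mono fun n ⟨hn, hd⟩ => ?_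
  rw [Metric.mem_ball] at hn ⊢
  calc dist (v n) y ≤ dist (u n) (v n) + dist (u n) y := dist_triangle_left _ _ _
    _ < ε / 2 + ε / 2 := add_lt_add hd hn
    _ = ε := add_halves ε

lemma mapClusterPt_iterate_iff_mem_range {α : Type*} [TopologicalSpace α] [T1Space α]
    {f : α → α} {z y : α} {p : ℕ} (hp : 0 < p) (hz : IsPeriodicPt f p z) :
    MapClusterPt y atTop (fun n => f^[n] z) ↔ y ∈ Set.range fun j : Fin p => f^[(j : ℕ)] z := by
  constructor
  · intro hy
    exact (finite_range _).isClosed.mem_of_mapClusterPt hy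
      (Eventually.of_forall fun n => ⟨⟨n % p, Nat.mod_lt n hp⟩, hz.iterate_mod_apply n⟩)
  · rintro ⟨j, rfl⟩
    refine MapClusterPt.of_comp (φ := fun i => j + p * i)
      (tendsto_atTop_mono (fun i => show i ≤ j + p * i by nlinarith) tendsto_id) ?_
    have hconst : (fun n => f^[n] z) ∘ (fun i => j + p * i) = fun _ => f^[j] z :=
      funext fun i => by simp only [comp_apply, iterate_add_apply, (hz.mul_const i).eq]
    rw [hconst]
    exact tendsto_const_nhds.mapClusterPt

def TendsToCycle (f : ℝ → ℝ) (x : ℝ) : Prop :=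
  ∃ (m : ℕ) (z : ℝ) (p : ℕ), 0 < p ∧ IsPeriodicPt f p z ∧
    Tendsto (fun n => dist (f^[n + m] x) (f^[n] z)) atTop (𝓝 0)

lemma omegaLimitPt_eq_range_of_tendsto_dist {f : ℝ → ℝ} {x z : ℝ} {m p : ℕ} (hp : 0 < p)
    (hz : IsPeriodicPt f p z) (h : Tendsto (fun n => dist (f^[n + m] x) (f^[n] z)) atTop (𝓝 0)) :
    omegaLimitPt f x = Set.range fun j : Fin p => f^[(j : ℕ)] z := by
  ext y
  have hshift : MapClusterPt y atTop (fun n => f^[n] x) ↔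
      MapClusterPt y atTop (fun n => f^[n + m] x) := by
    conv_lhs => rw [← map_add_atTop_eq_nat m]
    rfl
  rw [omegaLimitPt, mem_ofPred_eq, ← mapClusterPt_iterate_iff_mem_range hp hz, hshift]
  exact ⟨fun hy => hy.of_tendsto_dist h,
    fun hy => hy.of_tendsto_dist (by simpa only [dist_comm] using h)⟩

lemma tendsToCycle_of_iterate_eq {f : ℝ → ℝ} {x : ℝ} {n₁ n₂ : ℕ} (hlt : n₁ < n₂)
    (heq : f^[n₁] x = f^[n₂] x) : TendsToCycle f x := by
  refine ⟨n₁, f^[n₁] x, n₂ - n₁, Nat.sub_pos_of_lt hlt, ?_, by simp [iterate_add_apply]⟩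
  rw [IsPeriodicPt, IsFixedPt, ← iterate_add_apply, Nat.sub_add_cancel hlt.le, heq]

end OmegaLimit

section Bounds

variable {f : ℝ → ℝ} {c r : ℝ}

lemma abs_iterate_sub_le (hc : 0 ≤ c) (hf : ∀ t, |f t| - r ≤ c * (|t| - r)) (t : ℝ) (n : ℕ) :
    |f^[n] t| - r ≤ c ^ n * (|t| - r) := by
  induction n with
  | zero => simp
  | succ n ih =>
    rw [iterate_succ_apply', pow_succ', mul_assoc]
    exact (hf _).trans (mul_le_mul_of_nonneg_left ih hc)

lemma abs_le_of_isPeriodicPt (hc0 : 0 ≤ c) (hc1 : c < 1) (hf : ∀ t, |f t| - r ≤ c * (|t| - r))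
    {x : ℝ} {p : ℕ} (hp : 0 < p) (hx : IsPeriodicPt f p x) : |x| ≤ r := by
  have h := abs_iterate_sub_le hc0 hf x p
  rw [hx.eq] at h
  have hpow : c ^ p < 1 := pow_lt_one₀ hc0 hc1 hp.ne'
  nlinarith [pow_nonneg hc0 p]

lemma eventually_abs_iterate_le (hc0 : 0 ≤ c) (hc1 : c < 1)
    (hf : ∀ t, |f t| - r ≤ c * (|t| - r)) (t : ℝ) {R : ℝ} (hR : r < R) :
    ∀ᶠ n in atTop, |f^[n] t| ≤ R := by
  have hlim : Tendsto (fun n => c ^ n * (|t| - r)) atTop (𝓝 0) := by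
    simpa using (tendsto_pow_atTop_nhds_zero_of_lt_one hc0 hc1).mul_const (|t| - r)
  filter_upwards [hlim.eventually (gt_mem_nhds (sub_pos.2 hR))] with n hn
  linarith [abs_iterate_sub_le hc0 hf t n]

lemma tendsToCycle_of_abs_le (hc0 : 0 ≤ c) (hc1 : c < 1) (hf : ∀ t, |f t| ≤ c * |t|) (x : ℝ) :
    TendsToCycle f x := by
  have hf' : ∀ t, |f t| - 0 ≤ c * (|t| - 0) := by simpa using hf
  have hfix : IsFixedPt f 0 := abs_nonpos_iff.1 (by simpa using hf 0)
  refine ⟨0, 0, 1, one_pos, hfix, squeeze_zero (fun _ => dist_nonneg) (fun n => ?_)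
    (by simpa using (tendsto_pow_atTop_nhds_zero_of_lt_one hc0 hc1).mul_const |x|)⟩
  simpa [(hfix.iterate n).eq, Real.dist_eq] using abs_iterate_sub_le hc0 hf' x n

end Bounds

section Main

variable {k : ℕ} {hk : 2 ≤ k} {φ : Fin k → ℝ → ℝ} {a : Fin (k - 1) → ℝ} {I : Set ℝ}

lemma disjoint_uIcc_of_inter_Iio_eq {α : Type*} [LinearOrder α] {s : Set α} {x y : α}
    (hx : x ∉ s) (hy : y ∉ s) (h : s ∩ Iio x = s ∩ Iio y) : Disjoint (uIcc x y) s := by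
  rw [← subset_compl_iff_disjoint_right]
  intro t ht hts
  rcases mem_uIcc.1 ht with ⟨hxt, hty⟩ | ⟨hyt, htx⟩
  · have : t ∈ s ∩ Iio x := h ▸ ⟨hts, lt_of_le_of_ne hty (ne_of_mem_of_not_mem hts hy)⟩
    exact absurd hxt (not_le.2 this.2)
  · have : t ∈ s ∩ Iio y := h ▸ ⟨hts, lt_of_le_of_ne htx (ne_of_mem_of_not_mem hts hx)⟩
    exact absurd hyt (not_le.2 this.2)

lemma pcIdx_iterate_eq_of_inter_Iio_eq (hφ : ∀ i, Continuous (φ i)) (hI : I.OrdConnected)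
    {x y : ℝ} (hx : x ∈ I \ singSet hk φ a) (hy : y ∈ I \ singSet hk φ a)
    (h : singSet hk φ a ∩ I ∩ Iio x = singSet hk φ a ∩ I ∩ Iio y) (n : ℕ) :
    pcIdx hk a ((pc hk φ a)^[n] x) = pcIdx hk a ((pc hk φ a)^[n] y) := by
  refine pcIdx_iterate_eq_of_disjoint hφ ?_ n
  rw [← subset_compl_iff_disjoint_right]
  intro t ht htA
  exact (disjoint_uIcc_of_inter_Iio_eq (fun h => hx.2 h.1) (fun h => hy.2 h.1) h).ne_of_mem ht
    ⟨htA, hI.uIcc_subset hx.1 hy.1 ht⟩ rfl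

variable {lam : ℝ≥0} (hlip : ∀ i, LipschitzWith lam (φ i)) (hlam : lam < 1)
  (hI : I.OrdConnected) (hQ : (singSet hk φ a ∩ I).Finite)
include hlip hlam hI hQ

lemma finite_setOf_periodic (hper : ∀ x p, 0 < p → IsPeriodicPt (pc hk φ a) p x → x ∈ I) :
    {x | ∃ p, 1 ≤ p ∧ (pc hk φ a)^[p] x = x}.Finite := by
  set P := {x | ∃ p, 1 ≤ p ∧ (pc hk φ a)^[p] x = x}
  have hinj : InjOn (fun x => singSet hk φ a ∩ I ∩ Iio x) (P ∩ (I \ singSet hk φ a)) := by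
    rintro x ⟨⟨p, hp, hxp⟩, hx⟩ y ⟨⟨q, hq, hyq⟩, hy⟩ hxy
    exact eq_of_isPeriodicPt_of_pcIdx_eq hlip hlam hp hq hxp hyq
      (pcIdx_iterate_eq_of_inter_Iio_eq (fun i => (hlip i).continuous) hI hx hy hxy)
  have hreg : (P ∩ (I \ singSet hk φ a)).Finite :=
    Finite.of_injOn (fun _ _ => inter_subset_left) hinj hQ.finite_subsets
  refine (hQ.union hreg).subset fun x hx => ?_
  obtain ⟨p, hp, hxp⟩ := hx
  have hxI := hper x p hp hxp
  by_cases hxA : x ∈ singSet hk φ a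
  · exact Or.inl ⟨hxA, hxI⟩
  · exact Or.inr ⟨⟨p, hp, hxp⟩, hxI, hxA⟩

lemma tendsToCycle_pc (hns : ¬ hasSingConn φ a) {x : ℝ}
    (hx : ∀ᶠ n in atTop, (pc hk φ a)^[n] x ∈ I) : TendsToCycle (pc hk φ a) x := by
  by_cases hfreq : ∃ᶠ n in atTop, (pc hk φ a)^[n] x ∈ singSet hk φ a ∩ I
  · obtain ⟨n₁, -, n₂, -, hlt, heq⟩ :=
      (Nat.frequently_atTop_iff_infinite.1 hfreq).exists_lt_map_eq_of_mapsTo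
        (f := fun n => (pc hk φ a)^[n] x) (fun _ hn => hn) hQ
    exact tendsToCycle_of_iterate_eq hlt heq
  have hreg : ∀ᶠ n in atTop, (pc hk φ a)^[n] x ∈ I \ singSet hk φ a :=
    (hx.and (not_frequently.1 hfreq)).mono fun n ⟨hnI, hnA⟩ => ⟨hnI, fun h => hnA ⟨h, hnI⟩⟩
  obtain ⟨n₁, hn₁, n₂, hn₂, hlt, heq⟩ :=
    (Nat.frequently_atTop_iff_infinite.1 hreg.frequently).exists_lt_map_eq_of_mapsTo
      (f := fun n => singSet hk φ a ∩ I ∩ Iio ((pc hk φ a)^[n] x))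
      (fun _ _ => inter_subset_left) hQ.finite_subsets
  have hT : 0 < n₂ - n₁ := Nat.sub_pos_of_lt hlt
  have hreturn : (pc hk φ a)^[n₂ - n₁] ((pc hk φ a)^[n₁] x) = (pc hk φ a)^[n₂] x := by
    rw [← iterate_add_apply, Nat.sub_add_cancel hlt.le]
  have hper : Periodic (fun n => pcIdx hk a ((pc hk φ a)^[n] ((pc hk φ a)^[n₁] x))) (n₂ - n₁) :=
    fun n => by
      simp only [iterate_add_apply, hreturn]
      exact (pcIdx_iterate_eq_of_inter_Iio_eq (fun i => (hlip i).continuous) hI hn₁ hn₂ heq n).symm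
  obtain ⟨z, hz, hlim⟩ := exists_isPeriodicPt_tendsto_dist hlip hlam hns hT hper
  exact ⟨n₁, z, n₂ - n₁, hT, hz, by simpa only [iterate_add_apply] using hlim⟩

end Main

theorem stmt10_general {k : ℕ} (hk : 2 ≤ k) (φ : Fin k → ℝ → ℝ) (lam : ℝ≥0) (hlam : lam < 1)
    (hlip : ∀ i, LipschitzWith lam (φ i))
    (z : Fin k → ℝ) (hz : ∀ i, φ i (z i) = z i)
    (r : ℝ) (hr : r = ((1 + (lam : ℝ)) / (1 - (lam : ℝ))) * maxAbs hk z)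
    (a : Fin (k-1) → ℝ) (hns : ¬ hasSingConn φ a)
    (hQ : ((⋃ n : ℕ, (pc hk φ a)^[n] ⁻¹' Set.range a) ∩ Set.Icc (-(2*r)) (2*r)).Finite) :
    AsympPeriodic (pc hk φ a) := by
  have hlam' : (lam : ℝ) < 1 := hlam
  have hc : 0 ≤ maxAbs hk z :=
    (abs_nonneg _).trans (Finset.le_sup' (fun i => |z i|) (Finset.mem_univ ⟨0, by omega⟩))
  have hr0 : 0 ≤ r := hr ▸ mul_nonneg (div_nonneg (by positivity) (sub_nonneg.2 hlam'.le)) hc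
  have hf : ∀ t, |pc hk φ a t| - r ≤ lam * (|t| - r) := by
    have hrc : (1 + (lam : ℝ)) * maxAbs hk z = (1 - lam) * r := by
      rw [hr]
      field_simp [(sub_pos.2 hlam').ne']
    intro t
    linarith [abs_pc_le (hk := hk) (a := a) hlip hz t]
  have hI : (Icc (-(2 * r)) (2 * r)).OrdConnected := ordConnected_Icc
  refine ⟨finite_setOf_periodic hlip hlam hI hQ fun x p hp hx => ?_, fun x => ?_⟩
  · exact abs_le.1 ((abs_le_of_isPeriodicPt lam.coe_nonneg hlam' hf hp hx).trans (by linarith))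
  obtain ⟨m, z, p, hp, hz, hlim⟩ : TendsToCycle (pc hk φ a) x := by
    rcases hr0.eq_or_lt with rfl | hrpos
    · exact tendsToCycle_of_abs_le lam.coe_nonneg hlam' (by simpa using hf) x
    · refine tendsToCycle_pc hlip hlam hI hQ hns ?_
      filter_upwards [eventually_abs_iterate_le lam.coe_nonneg hlam' hf x
        (by linarith : r < 2 * r)] with n hn
      exact abs_le.1 hn
  exact ⟨z, p, hp, hz, omegaLimitPt_eq_range_of_tendsto_dist hp hz hlim⟩

theorem stmt10 {k : ℕ} (hk : 2 ≤ k) (φ : Fin k → ℝ → ℝ) (lam : ℝ≥0) (hlam : lam < 1)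
    (hlip : ∀ i, LipschitzWith lam (φ i)) (hinj : ∀ i, Function.Injective (φ i))
    (z : Fin k → ℝ) (hz : ∀ i, φ i (z i) = z i)
    (r : ℝ) (hr : r = ((1 + (lam : ℝ)) / (1 - (lam : ℝ))) * maxAbs hk z)
    (a : Fin (k-1) → ℝ) (ha : StrictMono a) (hns : ¬ hasSingConn φ a)
    (hQ : ((⋃ n : ℕ, (pc hk φ a)^[n] ⁻¹' Set.range a) ∩ Set.Icc (-(2*r)) (2*r)).Finite) :
    AsympPeriodic (pc hk φ a) :=
  stmt10_general hk φ lam hlam hlip z hz r hr a hns hQ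
end

section
/- Let Φ be an injective IFS, a ∈ Ω_k, ε > 0 and |δ| < ε. If Ω^ε_{Φ,a} ∩ S_{a+δ} = ∅, then Q_{a+δ} = (⋃_{n≥0} Q^{(n)}_{a+δ}) ∩ K_Φ is a finite set. -/
open Filter Set Topology
open scoped NNReal

lemma wcomp_succ {k : ℕ} (φ : Fin k → ℝ → ℝ) {n : ℕ} (ω : Fin (n+1) → Fin k) (x : ℝ) :
    wcomp φ ω x = wcomp φ (fun i => ω i.succ) (φ (ω 0) x) := by
  unfold wcomp
  rw [List.ofFn_succ, List.foldl_cons]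

lemma iter_eq_wcomp {k : ℕ} (hk : 2 ≤ k) (φ : Fin k → ℝ → ℝ) (b : Fin (k-1) → ℝ) :
    ∀ (n : ℕ) (x : ℝ),
      (pc hk φ b)^[n] x
        = wcomp φ (fun j : Fin n => pcIdx hk b ((pc hk φ b)^[(j : ℕ)] x)) x := by
  intro n
  induction n with
  | zero => intro x; rfl
  | succ n ih =>
    intro x
    rw [Function.iterate_succ_apply, ih (pc hk φ b x), wcomp_succ]
    congr 1

lemma wcomp_dist {k : ℕ} (φ : Fin k → ℝ → ℝ) (lam : ℝ≥0)
    (hlip : ∀ i, LipschitzWith lam (φ i)) :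
    ∀ (n : ℕ) (ω : Fin n → Fin k) (x y : ℝ),
      dist (wcomp φ ω x) (wcomp φ ω y) ≤ (lam : ℝ)^n * dist x y := by
  intro n
  induction n with
  | zero => intro ω x y; simp [wcomp]
  | succ n ih =>
    intro ω x y
    rw [wcomp_succ, wcomp_succ]
    calc dist (wcomp φ (fun i => ω i.succ) (φ (ω 0) x))
          (wcomp φ (fun i => ω i.succ) (φ (ω 0) y))
        ≤ (lam : ℝ)^n * dist (φ (ω 0) x) (φ (ω 0) y) := ih _ _ _
      _ ≤ (lam : ℝ)^n * ((lam : ℝ) * dist x y) := by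
          have := (hlip (ω 0)).dist_le_mul x y
          exact mul_le_mul_of_nonneg_left this (by positivity)
      _ = (lam : ℝ)^(n+1) * dist x y := by ring

lemma pc_preimage_finite {k : ℕ} (hk : 2 ≤ k) (φ : Fin k → ℝ → ℝ)
    (hinj : ∀ i, Function.Injective (φ i)) (b : Fin (k-1) → ℝ)
    {s : Set ℝ} (hs : s.Finite) : (pc hk φ b ⁻¹' s).Finite := by
  have hsub : pc hk φ b ⁻¹' s ⊆ ⋃ i, φ i ⁻¹' s := by
    intro x hx
    exact Set.mem_iUnion.mpr ⟨pcIdx hk b x, hx⟩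
  exact Set.Finite.subset (Set.finite_iUnion fun i =>
    hs.preimage ((hinj i).injOn)) hsub

lemma iter_preimage_finite {k : ℕ} (hk : 2 ≤ k) (φ : Fin k → ℝ → ℝ)
    (hinj : ∀ i, Function.Injective (φ i)) (b : Fin (k-1) → ℝ)
    {s : Set ℝ} (hs : s.Finite) : ∀ n : ℕ, ((pc hk φ b)^[n] ⁻¹' s).Finite := by
  intro n
  induction n with
  | zero => simpa using hs
  | succ n ih =>
    rw [Function.iterate_succ, Set.preimage_comp]
    exact pc_preimage_finite hk φ hinj b ih

theorem stmt17 {k : ℕ} (hk : 2 ≤ k) (φ : Fin k → ℝ → ℝ) (lam : ℝ≥0) (hlam : lam < 1)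
    (hlip : ∀ i, LipschitzWith lam (φ i)) (hinj : ∀ i, Function.Injective (φ i))
    (z : Fin k → ℝ) (hz : ∀ i, φ i (z i) = z i)
    (r : ℝ) (hr : r = ((1 + (lam : ℝ)) / (1 - (lam : ℝ))) * maxAbs hk z)
    (a : Fin (k-1) → ℝ) (ha : StrictMono a) (ε : ℝ) (hε : 0 < ε) (δ : ℝ) (hδ : |δ| < ε)
    (hdisj : omegaSet hk φ a ε ∩ Set.range (fun i => a i + δ) = ∅) :
    ((⋃ n : ℕ, (pc hk φ (fun i => a i + δ))^[n] ⁻¹' Set.range (fun i => a i + δ)) ∩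
      Set.Icc (-(2*r)) (2*r)).Finite := by
  classical
  set b : Fin (k-1) → ℝ := fun i => a i + δ with hb
  set f : ℝ → ℝ := pc hk φ b with hf
  by_contra hinf'
  rw [← Set.not_infinite, not_not] at hinf'
  have hSfin : (Set.range b).Finite := Set.finite_range b
  have hlam0 : (0:ℝ) ≤ (lam : ℝ) := lam.coe_nonneg
  have hlam1 : (lam : ℝ) < 1 := by exact_mod_cast hlam
  -- Step A: arbitrarily large minimal hitting times
  have key : ∀ N : ℕ, ∃ x : ℝ, ∃ n : ℕ, ∃ j : Fin (k-1),
      N ≤ n ∧ x ∈ Set.Icc (-(2*r)) (2*r) ∧ f^[n] x = b j ∧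
      ∀ i < n, f^[i] x ∉ Set.range b := by
    intro N
    have hUfin : (⋃ i ∈ Finset.range N, f^[i] ⁻¹' Set.range b).Finite :=
      Set.Finite.biUnion (Finset.range N).finite_toSet
        (fun i _ => iter_preimage_finite hk φ hinj b hSfin i)
    obtain ⟨x, hxQ, hxU⟩ := (hinf'.diff hUfin).nonempty
    obtain ⟨hxQ1, hxIcc⟩ := hxQ
    obtain ⟨_, ⟨n', rfl⟩, hn'⟩ := hxQ1
    have hex : ∃ n, f^[n] x ∈ Set.range b := ⟨n', hn'⟩
    set n0 := Nat.find hex with hn0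
    have hspec := Nat.find_spec hex
    obtain ⟨j, hj⟩ := hspec
    refine ⟨x, n0, j, ?_, hxIcc, hj.symm, fun i hi => Nat.find_min hex hi⟩
    by_contra hlt
    push_neg at hlt
    exact hxU (Set.mem_biUnion (Finset.mem_range.mpr hlt) ⟨j, hj⟩)
  choose x n j hn hxI hfx havoid using key
  -- the itinerary words
  set ω : ∀ m : ℕ, Fin (n m) → Fin k :=
    fun m i => pcIdx hk b (f^[(i : ℕ)] (x m)) with hω
  have h2r : (0:ℝ) ≤ 2*r := le_trans (abs_nonneg (x 0)) (abs_le.mpr ⟨(hxI 0).1, (hxI 0).2⟩)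
  have hdist : ∀ m : ℕ, dist (b (j m)) (wcomp φ (ω m) 0) ≤ (lam : ℝ)^(m) * (2*r) := by
    intro m
    have h1 : b (j m) = wcomp φ (ω m) (x m) := by
      rw [← hfx m, iter_eq_wcomp]
    rw [h1]
    calc dist (wcomp φ (ω m) (x m)) (wcomp φ (ω m) 0)
        ≤ (lam : ℝ)^(n m) * dist (x m) 0 := wcomp_dist φ lam hlip _ _ _ _
      _ ≤ (lam : ℝ)^(n m) * (2*r) := by
          apply mul_le_mul_of_nonneg_left _ (by positivity)
          rw [Real.dist_eq, sub_zero]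
          exact abs_le.mpr ⟨(hxI m).1, (hxI m).2⟩
      _ ≤ (lam : ℝ)^m * (2*r) :=
          mul_le_mul_of_nonneg_right
            (pow_le_pow_of_le_one hlam0 hlam1.le (hn m)) h2r
  -- pigeonhole
  obtain ⟨j0, hj0⟩ := Finite.exists_infinite_fiber j
  rw [Set.infinite_coe_iff] at hj0
  -- b j0 ∈ omegaSet
  have hmem : b j0 ∈ omegaSet hk φ a ε := by
    rw [omegaSet, Set.mem_iInter]
    intro M
    rw [Metric.mem_closure_iff]
    intro η hη
    have htend : Filter.Tendsto (fun m : ℕ => (lam:ℝ)^m * (2*r)) Filter.atTop (nhds 0) := by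
      have := (tendsto_pow_atTop_nhds_zero_of_lt_one hlam0 hlam1).mul_const (2*r)
      simpa using this
    have hev : ∀ᶠ m in Filter.atTop, (lam:ℝ)^m * (2*r) < η :=
      htend.eventually (gt_mem_nhds hη)
    obtain ⟨m0, hm0⟩ := Filter.eventually_atTop.mp hev
    obtain ⟨m, hmmem, hmgt⟩ := hj0.exists_gt (max M m0)
    have hmM : M ≤ m := le_of_lt (lt_of_le_of_lt (le_max_left _ _) hmgt)
    have hmm0 : m0 ≤ m := le_of_lt (lt_of_le_of_lt (le_max_right _ _) hmgt)
    refine ⟨wcomp φ (ω m) 0, ⟨n m, le_trans hmM (hn m), ω m, ?_, rfl⟩, ?_⟩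
    · exact ⟨δ, hδ.le, x m, havoid m, fun i => rfl⟩
    · have : j m = j0 := hmmem
      calc dist (b j0) (wcomp φ (ω m) 0)
          = dist (b (j m)) (wcomp φ (ω m) 0) := by rw [this]
        _ ≤ (lam : ℝ)^m * (2*r) := hdist m
        _ < η := hm0 m hmm0
  have : b j0 ∈ omegaSet hk φ a ε ∩ Set.range (fun i => a i + δ) :=
    ⟨hmem, ⟨j0, rfl⟩⟩
  rw [hdisj] at this
  exact this
end
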